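/- Let $X$ be a path-connected convenient space. The equality $\mathrm{ATC}_r(X)=0$ holds for some $r>0$ if and only if it holds for every $r>0$, if and only if $X$ is contractible. -/

import Mathlib

open scoped unitInterval

noncomputable section

universe u v


/-- Presentations of probability measures with finite support: a tuple of points
together with a point of the standard simplex. This is the disjoint union
`⨆ₙ Xⁿ × Δ^{n-1}`. -/
def PreProb (X : Type u) [TopologicalSpace X] : Type u :=
  Σ n : ℕ, (Fin (n + 1) → X) × (stdSimplex ℝ (Fin (n + 1)))

instance (X : Type u) [TopologicalSpace X] : TopologicalSpace (PreProb X) :=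
  inferInstanceAs (TopologicalSpace (Σ n : ℕ, (Fin (n + 1) → X) × (stdSimplex ℝ (Fin (n + 1)))))

/-- The space of probability measures with finite support, encoded as finitely
supported real-valued functions that are nonnegative and sum to `1`.  Its topology
(defined below) is coinduced from the space of presentations, i.e. it is the quotient
topology of the paper. -/
def FinProb (X : Type u) [TopologicalSpace X] : Type u :=
  { w : X →₀ ℝ // (∀ x, 0 ≤ w x) ∧ w.sum (fun _ t => t) = 1 }

/-- The quotient map from presentations to finitely supported probability measures,
`(x₁,…,xₙ,t₁,…,tₙ) ↦ ∑ tᵢ δ_{xᵢ}`. -/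
def PreProb.toFinProb {X : Type u} [TopologicalSpace X] (p : PreProb X) : FinProb X := by
  classical
  refine ⟨∑ i, Finsupp.single (p.2.1 i) ((p.2.2 : Fin (p.1 + 1) → ℝ) i), ?_, ?_⟩
  · intro x
    rw [Finsupp.finset_sum_apply]
    refine Finset.sum_nonneg fun i _ => ?_
    rw [Finsupp.single_apply]
    split
    · exact p.2.2.2.1 i
    · exact le_refl 0
  · rw [← Finsupp.sum_finset_sum_index (fun _ => rfl) (fun _ _ _ => rfl)]
    simpa [Finsupp.sum_single_index] using p.2.2.2.2

/-- The quotient topology on the space of probability measures with finite support. -/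
instance FinProb.instTopologicalSpace (X : Type u) [TopologicalSpace X] :
    TopologicalSpace (FinProb X) :=
  TopologicalSpace.coinduced PreProb.toFinProb inferInstance

/-- The weight that a finitely supported probability measure assigns to a point. -/
def FinProb.weight {X : Type u} [TopologicalSpace X] (μ : FinProb X) (x : X) : ℝ := μ.1 x

/-- The support of a finitely supported probability measure, as a finset. -/
def FinProb.supp {X : Type u} [TopologicalSpace X] (μ : FinProb X) : Finset X := μ.1.support

/-- `𝒫ₙ(X)`: the subspace of measures supported on at most `n` points. -/
def FinProbLe (X : Type u) [TopologicalSpace X] (n : ℕ) : Set (FinProb X) :=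
  { μ | μ.supp.card ≤ n }

/-- Covariant functoriality: the pushforward `f₊ : 𝒫(X) → 𝒫(Y)`,
`∑ tᵢ δ_{xᵢ} ↦ ∑ tᵢ δ_{f xᵢ}`. -/
def FinProb.map {X : Type u} {Y : Type v} [TopologicalSpace X] [TopologicalSpace Y]
    (f : X → Y) (μ : FinProb X) : FinProb Y := by
  classical
  refine ⟨Finsupp.mapDomain f μ.1, ?_, ?_⟩
  · intro y
    rw [Finsupp.mapDomain, Finsupp.sum_apply]
    refine Finset.sum_nonneg fun x _ => ?_
    dsimp only
    rw [Finsupp.single_apply]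
    split
    · exact μ.2.1 x
    · exact le_refl 0
  · rw [Finsupp.sum_mapDomain_index (fun _ => rfl) (fun _ _ _ => rfl)]
    exact μ.2.2

/-- The Dirac measure `δ_x`, i.e. the unit `η` of the monad `𝒫`. -/
def FinProb.dirac {X : Type u} [TopologicalSpace X] (x : X) : FinProb X := by
  classical
  refine ⟨Finsupp.single x 1, ?_, ?_⟩
  · intro y
    rw [Finsupp.single_apply]
    split
    · exact zero_le_one
    · exact le_refl 0
  · rw [Finsupp.sum_single_index rfl]

/-- `𝒫(f)`: the space of `f`-relative probability measures of finite support, i.e. those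
measures on `X` whose support is mapped by `f` to a single point of `Y`. -/
def FinProbRel {X : Type u} {Y : Type v} [TopologicalSpace X] (f : X → Y) :
    Set (FinProb X) :=
  { μ | ∃ y : Y, f '' ↑μ.supp = {y} }

/-- The projection `p : 𝒫(f) → Y`, sending a relative measure to the unique point of
`f(supp μ)`. -/
def FinProbRel.proj {X : Type u} {Y : Type v} [TopologicalSpace X] (f : X → Y)
    (μ : FinProbRel f) : Y :=
  Exists.choose μ.2

/-- The projection `𝒫(f) → Y` admits a continuous section with image in `𝒫_{n+1}(f)`. -/
def HasAnalogSec {X : Type u} {Y : Type v} [TopologicalSpace X] [TopologicalSpace Y]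
    (f : X → Y) (n : ℕ) : Prop :=
  ∃ s : Y → FinProbRel f, Continuous s ∧ (∀ y, FinProbRel.proj f (s y) = y) ∧
    ∀ y, (s y : FinProb X).supp.card ≤ n + 1

/-- The analog sectional category of a map: the least `n` such that the projection
`𝒫(f) → Y` admits a continuous section with image in `𝒫_{n+1}(f)` (`⊤` if there is
no such `n`). -/
def asecat {X : Type u} {Y : Type v} [TopologicalSpace X] [TopologicalSpace Y]
    (f : X → Y) : ℕ∞ :=
  sInf { n : ℕ∞ | ∃ m : ℕ, (m : ℕ∞) = n ∧ HasAnalogSec f m }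

/-- Evaluation of paths at the `r` equally spaced times `i/(r-1)`, `0 ≤ i < r`:
the fibration `π_X^r : X^{[0,1]} → X^r`. -/
def pathEval (X : Type u) [TopologicalSpace X] (r : ℕ) : C(I, X) → (Fin r → X) :=
  fun γ i => γ (Set.projIcc (0 : ℝ) 1 zero_le_one ((i : ℝ) / ((r : ℝ) - 1)))

/-- The based path space `(X, x₀)^{([0,1],{0})}`. -/
def BasedPaths (X : Type u) [TopologicalSpace X] (x₀ : X) : Type u :=
  { γ : C(I, X) // γ 0 = x₀ }

instance (X : Type u) [TopologicalSpace X] (x₀ : X) : TopologicalSpace (BasedPaths X x₀) :=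
  inferInstanceAs (TopologicalSpace { γ : C(I, X) // γ 0 = x₀ })

/-- Evaluation at `1` on the based path space. -/
def basedPathEval (X : Type u) [TopologicalSpace X] (x₀ : X) : BasedPaths X x₀ → X :=
  fun γ => γ.1 1

/-- The analog (LS-)category of a space. -/
def acat (X : Type u) [TopologicalSpace X] (x₀ : X) : ℕ∞ :=
  asecat (basedPathEval X x₀)

/-- The `r`-th sequential analog topological complexity; `ATC₁ = acat`. -/
def ATC (X : Type u) [TopologicalSpace X] (x₀ : X) (r : ℕ) : ℕ∞ :=
  if r = 1 then acat X x₀ else asecat (pathEval X r)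

/-- Classical sectional category data: `f` admits continuous sections over each of
`n + 1` open sets covering `Y`. -/
def HasSecCover {X : Type u} {Y : Type v} [TopologicalSpace X] [TopologicalSpace Y]
    (f : X → Y) (n : ℕ) : Prop :=
  ∃ U : Fin (n + 1) → Set Y, (∀ i, IsOpen (U i)) ∧ (⋃ i, U i) = Set.univ ∧
    ∀ i, ∃ s : U i → X, Continuous s ∧ ∀ y : U i, f (s y) = (y : Y)

/-- The classical sectional category (Schwarz genus) of a map. -/
def secat {X : Type u} {Y : Type v} [TopologicalSpace X] [TopologicalSpace Y]
    (f : X → Y) : ℕ∞ :=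
  sInf { n : ℕ∞ | ∃ m : ℕ, (m : ℕ∞) = n ∧ HasSecCover f m }

/-- The classical Lusternik–Schnirelmann category (normalized: `cat(point) = 0`). -/
def catLS (X : Type u) [TopologicalSpace X] (x₀ : X) : ℕ∞ :=
  secat (basedPathEval X x₀)

/-- The classical `r`-th sequential topological complexity. -/
def seqTC (X : Type u) [TopologicalSpace X] (x₀ : X) (r : ℕ) : ℕ∞ :=
  if r = 1 then catLS X x₀ else secat (pathEval X r)

/-- The cohomological dimension of a group `G`: the least `n` (possibly `⊤`) such that the
group cohomology `Hᵏ(G; M)` vanishes for all `G`-modules `M` and all `k > n`. -/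
def groupCd (G : Type) [Group G] : ℕ∞ :=
  sInf { n : ℕ∞ | ∀ (M : Rep ℤ G) (k : ℕ), n < (k : ℕ∞) → Subsingleton (groupCohomology M k) }

/-- `B` (with basepoint `b`) is a classifying space for the discrete group `G`: a convenient
(compactly generated Hausdorff), path-connected, aspherical space with fundamental group `G`
and the homotopy type of a CW complex; this characterizes the geometric realization of the
nerve of `G` up to homotopy equivalence. -/
structure IsClassifyingSpace (G : Type) [Group G] (B : Type u) [TopologicalSpace B]
    (b : B) : Prop where
  t2 : T2Space B
  compactlyGenerated : CompactlyGeneratedSpace B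
  pathConnected : PathConnectedSpace B
  aspherical : ∀ n : ℕ, 2 ≤ n → Subsingleton (HomotopyGroup (Fin n) B b)
  pi1 : Nonempty (FundamentalGroup B b ≃* G)
  cwType : ∃ K : TopCat.{u}, Nonempty (TopCat.CWComplex K) ∧ Nonempty (ContinuousMap.HomotopyEquiv B K)

/-- A covering map of degree `k`: every fiber has exactly `k` points. -/
def IsCoveringOfDegree {E : Type u} {X : Type v} [TopologicalSpace E] [TopologicalSpace X]
    (p : E → X) (k : ℕ) : Prop :=
  IsCoveringMap p ∧ ∀ x, (p ⁻¹' {x}).encard = (k : ℕ∞)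

/-- Hurewicz fibration: the homotopy lifting property with respect to all spaces. -/
def IsHurewiczFibration {E : Type u} {B : Type v} [TopologicalSpace E] [TopologicalSpace B]
    (p : E → B) : Prop :=
  ∀ (Z : Type max u v) (_ : TopologicalSpace Z) (H : C(Z × I, B)) (h : C(Z, E)),
    (∀ z, p (h z) = H (z, 0)) →
      ∃ L : C(Z × I, E), (∀ z, L (z, 0) = h z) ∧ ∀ q, p (L q) = H q

/-!
`ATCᵣ(X) = 0` says that the evaluation fibration has a continuous section through Dirac
measures, which is the same as an honest continuous section: the point carrying a Dirac
measure depends continuously on the measure, because the measures charging an open set form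
an open set. For `r = 1` a section of the endpoint map on based paths is a contraction. For
`r ≥ 2`, the paths a section chooses through `(z, x, …, x)` contract `X`; conversely, a
contraction `H` onto `x` yields the zigzag path that runs from each `y k` down to `x` along
`H` and back up to `y (k + 1)`, continuous because consecutive strands only meet at `x`.
-/

namespace PreProb

variable {X : Type u} [TopologicalSpace X]

lemma mem_supp_toFinProb (p : PreProb X) (z : X) :
    z ∈ p.toFinProb.supp ↔ ∃ i, (p.2.2 : Fin (p.1 + 1) → ℝ) i ≠ 0 ∧ p.2.1 i = z := by
  classical
  have hw : ∀ i, 0 ≤ (p.2.2 : Fin (p.1 + 1) → ℝ) i := p.2.2.2.1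
  simp only [FinProb.supp, toFinProb, Finsupp.mem_support_iff, Finsupp.finsetSum_apply,
    Finsupp.single_apply]
  rw [Ne, Finset.sum_eq_zero_iff_of_nonneg (fun i _ => by split_ifs <;> simp [hw])]
  simp only [Finset.mem_univ, true_implies, ite_eq_right_iff, not_forall, exists_prop]
  exact exists_congr fun _ => and_comm

lemma continuous_toFinProb : Continuous (toFinProb : PreProb X → FinProb X) :=
  continuous_coinduced_rng

end PreProb

namespace FinProb

variable {X : Type u} [TopologicalSpace X]

lemma isOpen_setOf_supp_meets {V : Set X} (hV : IsOpen V) :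
    IsOpen { μ : FinProb X | ∃ z ∈ μ.supp, z ∈ V } := by
  refine isOpen_coinduced.mpr (isOpen_sigma_iff.mpr fun n => ?_)
  change IsOpen {q | ∃ z ∈ (PreProb.toFinProb (⟨n, q⟩ : PreProb X)).supp, z ∈ V}
  have hpre : {q | ∃ z ∈ (PreProb.toFinProb (⟨n, q⟩ : PreProb X)).supp, z ∈ V} =
      ⋃ i : Fin (n + 1), {q : (Fin (n + 1) → X) × stdSimplex ℝ (Fin (n + 1)) |
        (q.2 : Fin (n + 1) → ℝ) i ≠ 0 ∧ q.1 i ∈ V} := by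
    ext q
    simp only [Set.mem_ofPred_eq, Set.mem_iUnion]
    constructor
    · rintro ⟨z, hz, hzV⟩
      obtain ⟨i, hi, rfl⟩ := (PreProb.mem_supp_toFinProb ⟨n, q⟩ z).1 hz
      exact ⟨i, hi, hzV⟩
    · rintro ⟨i, hi, hiV⟩
      exact ⟨_, (PreProb.mem_supp_toFinProb ⟨n, q⟩ _).2 ⟨i, hi, rfl⟩, hiV⟩
  rw [hpre]
  have hweight : ∀ i : Fin (n + 1), Continuous fun q : (Fin (n + 1) → X) ×
      stdSimplex ℝ (Fin (n + 1)) => (q.2 : Fin (n + 1) → ℝ) i :=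
    fun i => (continuous_apply i).comp (continuous_subtype_val.comp continuous_snd)
  exact isOpen_iUnion fun i => (isOpen_ne.preimage (hweight i)).inter
    (hV.preimage ((continuous_apply i).comp continuous_fst))

lemma supp_nonempty (μ : FinProb X) : μ.supp.Nonempty := by
  rw [Finset.nonempty_iff_ne_empty]
  intro h
  have hsum := μ.2.2
  rw [Finsupp.sum, show μ.1.support = ∅ from h, Finset.sum_empty] at hsum
  exact zero_ne_one hsum

lemma supp_dirac (x : X) : (dirac x).supp = {x} :=
  Finsupp.support_single x one_ne_zero

lemma continuous_dirac : Continuous (dirac : X → FinProb X) := by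
  have hδ : (fun _ => 1 : Fin 1 → ℝ) ∈ stdSimplex ℝ (Fin 1) :=
    ⟨fun _ => zero_le_one, by simp⟩
  have hpres : (dirac : X → FinProb X) =
      fun x => PreProb.toFinProb ⟨0, (fun _ => x, ⟨_, hδ⟩)⟩ := by
    funext x
    apply Subtype.ext
    simp [dirac, PreProb.toFinProb]
  rw [hpres]
  exact PreProb.continuous_toFinProb.comp (continuous_sigmaMk.comp (by fun_prop))

end FinProb

lemma FinProbRel.proj_eq_of_supp_eq_singleton {X : Type u} {Y : Type v} [TopologicalSpace X]
    {f : X → Y} (μ : FinProbRel f) {z : X}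
    (hz : (μ : FinProb X).supp = {z}) : FinProbRel.proj f μ = f z := by
  have hmem : f z ∈ f '' ↑(μ : FinProb X).supp := ⟨z, by simp [hz], rfl⟩
  rw [μ.2.choose_spec] at hmem
  exact hmem.symm

section AnalogSectionalCategory

variable {X : Type u} {Y : Type v} [TopologicalSpace X] [TopologicalSpace Y] {f : X → Y}

lemma hasAnalogSec_zero_iff :
    HasAnalogSec f 0 ↔ ∃ g : Y → X, Continuous g ∧ ∀ y, f (g y) = y := by
  constructor
  · rintro ⟨s, hs, hproj, hcard⟩
    have hsingle : ∀ y, ∃ z : X, (s y : FinProb X).supp = {z} := fun y =>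
      Finset.card_eq_one.1 (le_antisymm (hcard y) (FinProb.supp_nonempty _).card_pos)
    choose g hg using hsingle
    refine ⟨g, continuous_def.2 fun V hV => ?_, fun y => ?_⟩
    · have hpre : g ⁻¹' V = (fun y => (s y : FinProb X)) ⁻¹'
          { μ : FinProb X | ∃ z ∈ μ.supp, z ∈ V } := by
        ext y
        simp [hg y]
      rw [hpre]
      exact (FinProb.isOpen_setOf_supp_meets hV).preimage (continuous_subtype_val.comp hs)
    · rw [← FinProbRel.proj_eq_of_supp_eq_singleton _ (hg y), hproj]
  · rintro ⟨g, hg, hfg⟩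
    have hrel : ∀ y, FinProb.dirac (g y) ∈ FinProbRel f := fun y =>
      ⟨f (g y), by simp [FinProb.supp_dirac]⟩
    refine ⟨fun y => ⟨_, hrel y⟩, (FinProb.continuous_dirac.comp hg).subtype_mk _,
      fun y => ?_, fun y => by simp [FinProb.supp_dirac]⟩
    rw [FinProbRel.proj_eq_of_supp_eq_singleton _ (FinProb.supp_dirac (g y)), hfg]

lemma asecat_eq_zero_iff : asecat f = 0 ↔ HasAnalogSec f 0 := by
  constructor
  · intro h
    by_contra hn
    have hpos : (1 : ℕ∞) ≤ asecat f := by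
      refine le_sInf ?_
      rintro _ ⟨m, rfl, hm⟩
      exact_mod_cast Nat.one_le_iff_ne_zero.2 fun hm0 => hn (hm0 ▸ hm)
    simp [h] at hpos
  · exact fun h => nonpos_iff_eq_zero.1 (sInf_le ⟨0, rfl, h⟩)

lemma asecat_eq_zero_iff_exists_section :
    asecat f = 0 ↔ ∃ g : Y → X, Continuous g ∧ ∀ y, f (g y) = y :=
  asecat_eq_zero_iff.trans hasAnalogSec_zero_iff

end AnalogSectionalCategory

lemma ContractibleSpace.nonempty_homotopy_id_const {X : Type u} [TopologicalSpace X]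
    [ContractibleSpace X] (x : X) :
    Nonempty ((ContinuousMap.id X).Homotopy (ContinuousMap.const X x)) := by
  obtain ⟨y, ⟨H⟩⟩ := id_nullhomotopic X
  exact ⟨H.trans (PathConnectedSpace.somePath y x).toHomotopyConst⟩

lemma exists_section_basedPathEval_iff {X : Type u} [TopologicalSpace X] (x : X) :
    (∃ g : X → BasedPaths X x, Continuous g ∧ ∀ y, basedPathEval X x (g y) = y) ↔
      ContractibleSpace X := by
  constructor
  · rintro ⟨g, hg, hgy⟩
    have hcont : Continuous fun q : I × X => (g q.2).1 q.1 :=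
      continuous_eval.comp (((continuous_subtype_val.comp hg).comp continuous_snd).prodMk
        continuous_fst)
    exact (contractible_iff_id_nullhomotopic X).2
      ⟨x, ⟨ContinuousMap.Homotopy.symm ⟨⟨_, hcont⟩, fun y => (g y).2, hgy⟩⟩⟩
  · intro hX
    obtain ⟨H⟩ := ContractibleSpace.nonempty_homotopy_id_const x
    let F : C(X × I, X) := ⟨fun q => H (σ q.2, q.1), by fun_prop⟩
    have hF : ∀ y, F.curry y 0 = x := fun y => by simp [F]
    exact ⟨fun y => ⟨F.curry y, hF y⟩, F.curry.continuous.subtype_mk hF,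
      fun y => by simp [F, basedPathEval]⟩

lemma two_mul_abs_sub_eq_one_of_ne {α : Type*} [Field α] [LinearOrder α] [IsStrictOrderedRing α]
    {s : α} {a b : ℤ} (ha : |s - a| ≤ 1 / 2) (hb : |s - b| ≤ 1 / 2) (hab : a ≠ b) :
    2 * |s - a| = 1 := by
  have hdist : (1 : α) ≤ |(a : α) - b| := by exact_mod_cast Int.one_le_abs (sub_ne_zero.2 hab)
  have htri : |(a : α) - b| ≤ |s - a| + |s - b| := by
    simpa only [abs_sub_comm (a : α) s] using abs_sub_le (a : α) s b
  linarith

lemma coe_clamp_toNat_round {α : Type*} [Field α] [LinearOrder α] [IsStrictOrderedRing α]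
    [FloorRing α] {c : ℕ} {s : α} (hs₀ : 0 ≤ s) (hsc : s ≤ c) :
    ((Fin.clamp (round s).toNat c : ℕ) : α) = round s := by
  have h₀ : 0 ≤ round s := by rw [round_eq]; exact Int.floor_nonneg.2 (by linarith)
  have hc : round s ≤ c := by
    have : (round s : α) < c + 1 := by linarith [round_le_add_half s]
    exact_mod_cast Int.lt_add_one_iff.1 (by exact_mod_cast this)
  have hval : ((Fin.clamp (round s).toNat c : ℕ) : ℤ) = round s := by
    simp only [Fin.clamp]
    omega
  exact_mod_cast hval

lemma natCast_mul_projIcc_div {c : ℕ} (hc : 0 < c) (i : Fin (c + 1)) :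
    (c : ℝ) * (Set.projIcc 0 1 zero_le_one ((i : ℝ) / (((c + 1 : ℕ) : ℝ) - 1)) : ℝ)
      = i := by
  have hc' : (0 : ℝ) < c := by exact_mod_cast hc
  have hi : (i : ℝ) ≤ c := by exact_mod_cast Nat.lt_succ_iff.1 i.is_lt
  have hmem : (i : ℝ) / (((c + 1 : ℕ) : ℝ) - 1) ∈ Set.Icc (0 : ℝ) 1 := by
    push_cast
    rw [add_sub_cancel_right]
    exact ⟨by positivity, (div_le_one hc').2 hi⟩
  rw [Set.projIcc_of_mem _ hmem]
  push_cast
  rw [add_sub_cancel_right]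
  exact mul_div_cancel₀ _ hc'.ne'

section Zigzag

variable {X : Type u} [TopologicalSpace X] {x : X}
  (H : (ContinuousMap.id X).Homotopy (ContinuousMap.const X x)) (c : ℕ)

/-- At time `t`, with `s = c t`, this is `H` at height `2 |s - round s|` above the node
`y (round s)`: the path passes `y k` at time `k / c` and `x` halfway between two nodes. -/
def contractionZigzag (q : (Fin (c + 1) → X) × I) : X :=
  H (Set.projIcc 0 1 zero_le_one (2 * |c * (q.2 : ℝ) - round (c * (q.2 : ℝ))|),
    q.1 (Fin.clamp (round (c * (q.2 : ℝ))).toNat c))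

variable {c}

lemma contractionZigzag_eq_of_abs_sub_le {q : (Fin (c + 1) → X) × I} {k : Fin (c + 1)}
    (hq : |c * (q.2 : ℝ) - k| ≤ 1 / 2) :
    contractionZigzag H c q =
      H (Set.projIcc 0 1 zero_le_one (2 * |c * (q.2 : ℝ) - k|), q.1 k) := by
  unfold contractionZigzag
  set s := (c : ℝ) * q.2
  by_cases hk : round s = (k : ℕ)
  · have hclamp : Fin.clamp (k : ℕ) c = k := Fin.ext (min_eq_left (Nat.lt_succ_iff.1 k.is_lt))
    rw [hk, Int.toNat_natCast, hclamp, Int.cast_natCast]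
  · -- two distinct integers within `1 / 2` of `s`: both strands are at the apex `x` of `H`
    have hq' : |s - ((k : ℕ) : ℤ)| ≤ 1 / 2 := by exact_mod_cast hq
    have hround : 2 * |s - round s| = 1 := two_mul_abs_sub_eq_one_of_ne (abs_sub_round s) hq' hk
    have hk' : 2 * |s - k| = 1 := by
      exact_mod_cast two_mul_abs_sub_eq_one_of_ne hq' (abs_sub_round s) (Ne.symm hk)
    simp [hround, hk', Set.projIcc_right]

lemma continuous_contractionZigzag : Continuous (contractionZigzag H c) := by
  let strip : Fin (c + 1) → Set ((Fin (c + 1) → X) × I) :=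
    fun k => {q | |c * (q.2 : ℝ) - k| ≤ 1 / 2}
  refine (locallyFinite_of_finite strip).continuous ?_ (fun k => isClosed_le (by fun_prop)
    continuous_const) fun k => ?_
  · refine Set.eq_univ_of_forall fun q =>
      Set.mem_iUnion.2 ⟨Fin.clamp (round (c * (q.2 : ℝ))).toNat c, ?_⟩
    have hs₀ : 0 ≤ (c : ℝ) * q.2 := mul_nonneg c.cast_nonneg q.2.2.1
    have hsc : (c : ℝ) * q.2 ≤ c := mul_le_of_le_one_right c.cast_nonneg q.2.2.2
    show |c * (q.2 : ℝ) - _| ≤ 1 / 2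
    rw [coe_clamp_toNat_round hs₀ hsc]
    exact abs_sub_round _
  · refine Continuous.continuousOn ?_ |>.congr fun q hq => contractionZigzag_eq_of_abs_sub_le H hq
    fun_prop

lemma pathEval_curry_contractionZigzag (hc : 0 < c) (y : Fin (c + 1) → X) :
    pathEval X (c + 1) ((⟨_, continuous_contractionZigzag H⟩ : C(_, X)).curry y) = y := by
  funext i
  have hnode : |(c : ℝ) * (Set.projIcc (0 : ℝ) 1 zero_le_one
      ((i : ℝ) / (((c + 1 : ℕ) : ℝ) - 1)) : ℝ) - i| ≤ 1 / 2 := by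
    rw [natCast_mul_projIcc_div hc]; norm_num
  simp only [pathEval, ContinuousMap.curry_apply, ContinuousMap.coe_mk]
  rw [contractionZigzag_eq_of_abs_sub_le H hnode, natCast_mul_projIcc_div hc]
  simp

end Zigzag

lemma pathEval_zero {X : Type u} [TopologicalSpace X] {r : ℕ} (γ : C(I, X)) :
    pathEval X (r + 1) γ 0 = γ 0 := by
  simp [pathEval]

lemma pathEval_last {X : Type u} [TopologicalSpace X] {c : ℕ} (γ : C(I, X)) :
    pathEval X (c + 2) γ (Fin.last (c + 1)) = γ 1 := by
  have hc : (c : ℝ) + 2 - 1 = c + 1 := by ring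
  simp [pathEval, hc, div_self (by positivity : (c : ℝ) + 1 ≠ 0)]

lemma exists_section_pathEval_iff {X : Type u} [TopologicalSpace X] (x : X) {r : ℕ}
    (hr : 2 ≤ r) :
    (∃ g : (Fin r → X) → C(I, X), Continuous g ∧ ∀ y, pathEval X r (g y) = y) ↔
      ContractibleSpace X := by
  constructor
  · rintro ⟨g, hg, hgy⟩
    obtain ⟨c, rfl⟩ : ∃ c, r = c + 2 := ⟨r - 2, by omega⟩
    let tuple : X → Fin (c + 2) → X := fun z => Fin.cons z fun _ => x
    have hcont : Continuous fun q : I × X => g (tuple q.2) q.1 :=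
      continuous_eval.comp ((hg.comp ((by fun_prop : Continuous tuple).comp continuous_snd)).prodMk
        continuous_fst)
    refine (contractible_iff_id_nullhomotopic X).2
      ⟨x, ⟨⟨⟨_, hcont⟩, fun z => ?_, fun z => ?_⟩⟩⟩
    · simpa [tuple] using (pathEval_zero (g (tuple z))).symm.trans (congrFun (hgy (tuple z)) 0)
    · simpa [tuple] using (pathEval_last (g (tuple z))).symm.trans
        (congrFun (hgy (tuple z)) (Fin.last (c + 1)))
  · intro hX
    obtain ⟨H⟩ := ContractibleSpace.nonempty_homotopy_id_const x
    obtain ⟨c, rfl⟩ : ∃ c, r = c + 1 := ⟨r - 1, by omega⟩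
    exact ⟨_, (ContinuousMap.curry ⟨_, continuous_contractionZigzag H⟩).continuous,
      pathEval_curry_contractionZigzag H (by omega)⟩

theorem ATC_eq_zero_iff {X : Type u} [TopologicalSpace X] (x : X) {r : ℕ} (hr : 0 < r) :
    ATC X x r = 0 ↔ ContractibleSpace X := by
  rw [ATC]
  split_ifs with h1
  · rw [acat, asecat_eq_zero_iff_exists_section, exists_section_basedPathEval_iff]
  · rw [asecat_eq_zero_iff_exists_section, exists_section_pathEval_iff x (by omega)]

theorem ATC_eq_zero_iff_contractible_general {X : Type u} [TopologicalSpace X] (x : X) :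
    ((∃ r : ℕ, 0 < r ∧ ATC X x r = 0) ↔ ContractibleSpace X) ∧
      ((∀ r : ℕ, 0 < r → ATC X x r = 0) ↔ ContractibleSpace X) :=
  ⟨⟨fun ⟨_, hr, h⟩ => (ATC_eq_zero_iff x hr).1 h,
      fun h => ⟨1, one_pos, (ATC_eq_zero_iff x one_pos).2 h⟩⟩,
    ⟨fun h => (ATC_eq_zero_iff x one_pos).1 (h 1 one_pos),
      fun h _ hr => (ATC_eq_zero_iff x hr).2 h⟩⟩

/-- For a path-connected space `X`, the equality `ATCᵣ(X) = 0` holds for some `r > 0` if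
and only if it holds for every `r > 0`, if and only if `X` is contractible. -/
theorem ATC_eq_zero_iff_contractible {X : Type u} [TopologicalSpace X] [T2Space X]
    [CompactlyGeneratedSpace X] [PathConnectedSpace X] (x : X) :
    ((∃ r : ℕ, 0 < r ∧ ATC X x r = 0) ↔ ContractibleSpace X) ∧
      ((∀ r : ℕ, 0 < r → ATC X x r = 0) ↔ ContractibleSpace X) :=
  ATC_eq_zero_iff_contractible_general x

end
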